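/- Let K = (0,ε)³ be a unit lattice cell of side ε > 0 and let v : closure(K) → ℝ be continuous and piecewise affine with respect to a type A decomposition of K into six tetrahedra. Then for each coordinate direction α ∈ {1,2,3}, ∫_K ∂_α v(x) dx equals (ε³/6) times the sum over the six tetrahedra T of the difference quotient of v along the edge of T in direction e_α divided by ε. In particular, for a single tetrahedron T of the decomposition, ∫_T ∇v dx = (ε³/6) ∇̃v|_T, where ∇̃v|_T is the matrix of difference quotients of v along the three edges of T parallel to coordinate axes. -/

import Mathlib

open MeasureTheory
open scoped RealInnerProductSpace

noncomputable section

/-- ℝ³ as a Euclidean space. -/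
abbrev E3 := EuclideanSpace ℝ (Fin 3)

/-- Build a point of `E3` from a plain function. -/
def ev (f : Fin 3 → ℝ) : E3 := WithLp.toLp 2 f

/-- The `α`-th standard basis vector of ℝ³. -/
def e3 (α : Fin 3) : E3 := EuclideanSpace.single α 1

/-- The open cube `(0,ε)³`. -/
def cellK (ε : ℝ) : Set E3 := {x | ∀ i, x i ∈ Set.Ioo 0 ε}

/-- The (closed) tetrahedron of the type A (Kuhn) decomposition of the cube `[0,ε]³`
associated to the permutation `σ`.  The six tetrahedra obtained in this way have as edges
the main diagonal from `0` to `(ε,ε,ε)`, the face diagonals emanating from `0` and from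
`(ε,ε,ε)`, and the cube edges. -/
def kuhnTet (ε : ℝ) (σ : Equiv.Perm (Fin 3)) : Set E3 :=
  {x | 0 ≤ x (σ 0) ∧ x (σ 0) ≤ x (σ 1) ∧ x (σ 1) ≤ x (σ 2) ∧ x (σ 2) ≤ ε}

/-- The starting point of the unique edge of the tetrahedron `kuhnTet ε σ` that is
parallel to the coordinate direction `e_α`; the edge runs from `qEdge ε σ α` to
`qEdge ε σ α + ε • e3 α`. -/
def qEdge (ε : ℝ) (σ : Equiv.Perm (Fin 3)) (α : Fin 3) : E3 :=
  ev fun i => if σ.symm α < σ.symm i then ε else 0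

/-
The six Kuhn tetrahedra cover the closed cube and pairwise meet only in points with two equal
coordinates, a null set; a permutation of the coordinates is a volume-preserving isometry carrying
one tetrahedron onto another, so each has volume `ε³/6`. The frontier of a convex set is null, so
on a tetrahedron where `v = ⟪a, ·⟫ + c` we have `∂_α v = a_α` almost everywhere, and `a_α` is the
difference quotient along the edge in direction `e_α` because both endpoints of that edge lie in
the tetrahedron. The open cube differs from the closed one by a null set, so its integral is the
sum of the six tetrahedral integrals.
-/

theorem ae_fderiv_eq_of_eqOn_convex {E F : Type*} [NormedAddCommGroup E] [NormedSpace ℝ E]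
    [MeasurableSpace E] [BorelSpace E] [FiniteDimensional ℝ E] [NormedAddCommGroup F]
    [NormedSpace ℝ F] (μ : Measure E) [μ.IsAddHaarMeasure] {s : Set E} (hs : Convex ℝ s)
    {v g : E → F} (hvg : Set.EqOn v g s) :
    ∀ᵐ x ∂μ, x ∈ s → fderiv ℝ v x = fderiv ℝ g x := by
  filter_upwards [measure_eq_zero_iff_ae_notMem.mp (hs.addHaar_frontier μ)] with x hx hxs
  have hx_int : x ∈ interior s := self_sdiff_frontier s ▸ ⟨hxs, hx⟩
  exact Filter.EventuallyEq.fderiv_eq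
    (Filter.eventuallyEq_of_mem (mem_interior_iff_mem_nhds.mp hx_int) hvg)

theorem volume_setOf_apply_eq_apply {ι : Type*} [Fintype ι] {i j : ι} (hij : i ≠ j) :
    volume {x : EuclideanSpace ℝ ι | x i = x j} = 0 := by
  classical
  let f : EuclideanSpace ℝ ι →ₗ[ℝ] ℝ :=
    (EuclideanSpace.proj i - EuclideanSpace.proj j : EuclideanSpace ℝ ι →L[ℝ] ℝ)
  have hf : {x : EuclideanSpace ℝ ι | x i = x j} = LinearMap.ker f := by
    ext x; simp [f, sub_eq_zero]
  rw [hf]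
  refine Measure.addHaar_submodule volume _ fun h => ?_
  have := h ▸ Submodule.mem_top (x := EuclideanSpace.single i (1 : ℝ))
  simp [f, hij.symm] at this

theorem volume_setOf_not_injective {ι : Type*} [Fintype ι] :
    volume {x : EuclideanSpace ℝ ι | ¬ Function.Injective x} = 0 := by
  have hsub : {x : EuclideanSpace ℝ ι | ¬ Function.Injective x} ⊆
      ⋃ p : {p : ι × ι // p.1 ≠ p.2}, {x | x p.1.1 = x p.1.2} := by
    intro x hx
    simp only [Function.Injective, not_forall] at hx
    obtain ⟨i, j, hx, hij⟩ := hx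
    exact Set.mem_iUnion.2 ⟨⟨(i, j), hij⟩, hx⟩
  exact measure_mono_null hsub (measure_iUnion_null fun p => volume_setOf_apply_eq_apply p.2)

def closedCell (ε : ℝ) : Set E3 := {x | ∀ i, x i ∈ Set.Icc 0 ε}

theorem closedCell_eq_preimage_Icc (ε : ℝ) :
    closedCell ε = WithLp.ofLp ⁻¹' Set.Icc 0 (fun _ => ε) := by
  ext x
  simp [closedCell, Pi.le_def, forall_and]

theorem measurableSet_kuhnTet (ε : ℝ) (σ : Equiv.Perm (Fin 3)) :
    MeasurableSet (kuhnTet ε σ) := by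
  simp only [kuhnTet, Set.ofPred_and]
  refine .inter (measurableSet_le ?_ ?_) (.inter (measurableSet_le ?_ ?_)
    (.inter (measurableSet_le ?_ ?_) (measurableSet_le ?_ ?_))) <;> fun_prop

theorem convex_kuhnTet (ε : ℝ) (σ : Equiv.Perm (Fin 3)) : Convex ℝ (kuhnTet ε σ) := by
  rintro x ⟨hx₁, hx₂, hx₃, hx₄⟩ y ⟨hy₁, hy₂, hy₃, hy₄⟩ p q hp hq hpq
  refine ⟨?_, ?_, ?_, ?_⟩ <;>
    simp only [PiLp.add_apply, PiLp.smul_apply, smul_eq_mul] <;> nlinarith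

theorem monotone_comp_of_mem_kuhnTet {ε : ℝ} {σ : Equiv.Perm (Fin 3)} {x : E3}
    (hx : x ∈ kuhnTet ε σ) : Monotone (x.ofLp ∘ σ) := by
  rw [Fin.monotone_iff_le_succ]
  intro i
  fin_cases i
  exacts [hx.2.1, hx.2.2.1]

theorem iUnion_kuhnTet (ε : ℝ) : ⋃ σ, kuhnTet ε σ = closedCell ε := by
  ext x
  simp only [Set.mem_iUnion]
  constructor
  · rintro ⟨σ, h₀, h₀₁, h₁₂, h₂⟩ i
    obtain ⟨j, rfl⟩ := σ.surjective i
    fin_cases j <;> constructor <;> simp <;> linarith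
  · intro hx
    have hm := Tuple.monotone_sort x.ofLp
    exact ⟨Tuple.sort x.ofLp, (hx _).1, hm (by decide : (0 : Fin 3) ≤ 1),
      hm (by decide : (1 : Fin 3) ≤ 2), (hx _).2⟩

theorem kuhnTet_inter_subset {ε : ℝ} {σ τ : Equiv.Perm (Fin 3)} (h : σ ≠ τ) :
    kuhnTet ε σ ∩ kuhnTet ε τ ⊆ {x | ¬ Function.Injective x} := by
  rintro x ⟨hσ, hτ⟩ hinj
  have eq_sort : ∀ ρ, x ∈ kuhnTet ε ρ → ρ = Tuple.sort x.ofLp := fun ρ hρ =>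
    Tuple.eq_sort_iff.2 ⟨monotone_comp_of_mem_kuhnTet hρ,
      fun i j hij hx => absurd (ρ.injective (hinj hx)) hij.ne⟩
  exact h ((eq_sort σ hσ).trans (eq_sort τ hτ).symm)

theorem pairwise_aedisjoint_kuhnTet (ε : ℝ) :
    Pairwise (Function.onFun (AEDisjoint volume) (kuhnTet ε)) :=
  fun _ _ h => measure_mono_null (kuhnTet_inter_subset h) volume_setOf_not_injective

theorem volume_kuhnTet_eq (ε : ℝ) (σ τ : Equiv.Perm (Fin 3)) :
    volume (kuhnTet ε σ) = volume (kuhnTet ε τ) := by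
  let P := LinearIsometryEquiv.piLpCongrLeft 2 ℝ ℝ (τ.symm.trans σ)
  have hpre : P ⁻¹' kuhnTet ε σ = kuhnTet ε τ := by
    ext x
    simp [P, kuhnTet, LinearIsometryEquiv.piLpCongrLeft_apply, Equiv.piCongrLeft'_apply]
  rw [← hpre, P.measurePreserving.measure_preimage (measurableSet_kuhnTet ε σ).nullMeasurableSet]

theorem volume_closedCell {ε : ℝ} (hε : 0 ≤ ε) :
    volume (closedCell ε) = ENNReal.ofReal (ε ^ 3) := by
  rw [closedCell_eq_preimage_Icc,
    (PiLp.volume_preserving_ofLp _).measure_preimage measurableSet_Icc.nullMeasurableSet,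
    Real.volume_Icc_pi]
  simp [ENNReal.ofReal_pow hε]

theorem cellK_ae_eq_closedCell (ε : ℝ) : cellK ε =ᵐ[volume] closedCell ε := by
  have hK : cellK ε = WithLp.ofLp ⁻¹' Set.univ.pi fun _ => Set.Ioo 0 ε := by
    ext x; simp [cellK]
  rw [hK, closedCell_eq_preimage_Icc]
  exact (PiLp.volume_preserving_ofLp _).quasiMeasurePreserving.preimage_ae_eq
    Measure.univ_pi_Ioo_ae_eq_Icc

theorem volume_kuhnTet {ε : ℝ} (hε : 0 ≤ ε) (σ : Equiv.Perm (Fin 3)) :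
    volume (kuhnTet ε σ) = ENNReal.ofReal (ε ^ 3 / 6) := by
  have h6 : 6 * volume (kuhnTet ε σ) = ENNReal.ofReal (ε ^ 3) := by
    rw [← volume_closedCell hε, ← iUnion_kuhnTet, measure_iUnion₀ (pairwise_aedisjoint_kuhnTet ε)
      fun τ => (measurableSet_kuhnTet ε τ).nullMeasurableSet, tsum_fintype]
    simp [volume_kuhnTet_eq ε _ σ, Fintype.card_perm, Nat.factorial]
  rw [ENNReal.ofReal_div_of_pos (by norm_num), ENNReal.ofReal_ofNat]
  exact (ENNReal.eq_div_iff (by norm_num) (by norm_num)).2 h6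

theorem qEdge_apply_perm (ε : ℝ) (σ : Equiv.Perm (Fin 3)) (α j : Fin 3) :
    qEdge ε σ α (σ j) = if σ.symm α < j then ε else 0 := by
  simp [qEdge, ev]

theorem qEdge_add_apply_perm (ε : ℝ) (σ : Equiv.Perm (Fin 3)) (α j : Fin 3) :
    (qEdge ε σ α + ε • e3 α) (σ j) = if σ.symm α ≤ j then ε else 0 := by
  simp only [PiLp.add_apply, PiLp.smul_apply, qEdge_apply_perm, e3,
    PiLp.single_apply, ← σ.eq_symm_apply, smul_eq_mul]
  rcases lt_trichotomy (σ.symm α) j with h | rfl | h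
  · simp [h, h.le, h.ne']
  · simp
  · simp [h.ne, not_lt_of_gt h, not_le_of_gt h]

theorem mem_kuhnTet_of_apply_perm_eq_ite {ε : ℝ} (hε : 0 ≤ ε) {σ : Equiv.Perm (Fin 3)}
    {p : Fin 3 → Prop} [DecidablePred p] (hp : Monotone p) {x : E3}
    (hx : ∀ j, x (σ j) = if p j then ε else 0) : x ∈ kuhnTet ε σ := by
  have h₀₁ := hp (by decide : (0 : Fin 3) ≤ 1)
  have h₁₂ := hp (by decide : (1 : Fin 3) ≤ 2)
  simp only [kuhnTet, Set.mem_ofPred_eq, hx]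
  refine ⟨?_, ?_, ?_, ?_⟩ <;> split_ifs <;> simp_all

theorem qEdge_mem_kuhnTet {ε : ℝ} (hε : 0 ≤ ε) (σ : Equiv.Perm (Fin 3)) (α : Fin 3) :
    qEdge ε σ α ∈ kuhnTet ε σ :=
  mem_kuhnTet_of_apply_perm_eq_ite hε (fun _ _ h hj => hj.trans_le h) (qEdge_apply_perm ε σ α)

theorem qEdge_add_mem_kuhnTet {ε : ℝ} (hε : 0 ≤ ε) (σ : Equiv.Perm (Fin 3)) (α : Fin 3) :
    qEdge ε σ α + ε • e3 α ∈ kuhnTet ε σ :=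
  mem_kuhnTet_of_apply_perm_eq_ite hε (fun _ _ h hj => hj.trans h) (qEdge_add_apply_perm ε σ α)

theorem inner_e3 (a : E3) (α : Fin 3) : ⟪a, e3 α⟫ = a α := by
  simp [e3, EuclideanSpace.inner_single_right]

section Affine

variable {F : Type*} [NormedAddCommGroup F] [InnerProductSpace ℝ F]
  {s : Set F} {v : F → ℝ} {a : F} {c : ℝ}

theorem sub_eq_inner_of_eqOn_inner_add_const (hv : ∀ x ∈ s, v x = ⟪a, x⟫ + c) {p w : F}
    (hp : p ∈ s) (hpw : p + w ∈ s) : v (p + w) - v p = ⟪a, w⟫ := by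
  rw [hv _ hpw, hv _ hp, inner_add_right]
  ring

theorem fderiv_inner_add_const (x : F) :
    fderiv ℝ (fun y => ⟪a, y⟫ + c) x = innerSL ℝ a :=
  ((innerSL ℝ a).hasFDerivAt.add_const c).fderiv

end Affine

section PiecewiseAffine

variable {ε : ℝ} {σ : Equiv.Perm (Fin 3)} {v : E3 → ℝ} {a : E3} {c : ℝ}

theorem apply_qEdge_add_sub_apply_qEdge (hε : 0 ≤ ε)
    (hv : ∀ x ∈ kuhnTet ε σ, v x = ⟪a, x⟫ + c) (α : Fin 3) :
    v (qEdge ε σ α + ε • e3 α) - v (qEdge ε σ α) = ε * a α := by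
  rw [sub_eq_inner_of_eqOn_inner_add_const hv (qEdge_mem_kuhnTet hε σ α)
    (qEdge_add_mem_kuhnTet hε σ α), real_inner_smul_right, inner_e3]

theorem ae_restrict_fderiv_kuhnTet (hv : ∀ x ∈ kuhnTet ε σ, v x = ⟪a, x⟫ + c) (α : Fin 3) :
    (fun x => fderiv ℝ v x (e3 α)) =ᵐ[volume.restrict (kuhnTet ε σ)] fun _ => a α := by
  refine (ae_restrict_iff' (measurableSet_kuhnTet ε σ)).2 ?_
  filter_upwards [ae_fderiv_eq_of_eqOn_convex volume (convex_kuhnTet ε σ) hv] with x hx hxT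
  rw [hx hxT, fderiv_inner_add_const, innerSL_apply_apply, inner_e3]

theorem integrableOn_fderiv_kuhnTet (hε : 0 ≤ ε) (hv : ∀ x ∈ kuhnTet ε σ, v x = ⟪a, x⟫ + c)
    (α : Fin 3) : IntegrableOn (fun x => fderiv ℝ v x (e3 α)) (kuhnTet ε σ) :=
  (integrableOn_const (C := a α) (by simp [volume_kuhnTet hε])).congr_fun_ae
    (ae_restrict_fderiv_kuhnTet hv α).symm

theorem setIntegral_fderiv_kuhnTet (hε : 0 ≤ ε) (hv : ∀ x ∈ kuhnTet ε σ, v x = ⟪a, x⟫ + c)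
    (α : Fin 3) : ∫ x in kuhnTet ε σ, fderiv ℝ v x (e3 α) = ε ^ 3 / 6 * a α := by
  rw [integral_congr_ae (ae_restrict_fderiv_kuhnTet hv α), setIntegral_const, measureReal_def,
    volume_kuhnTet hε, ENNReal.toReal_ofReal (by positivity), smul_eq_mul]

end PiecewiseAffine

theorem stmt5_general (ε : ℝ) (hε : 0 < ε) (v : E3 → ℝ)
    (hpl : ∀ σ : Equiv.Perm (Fin 3), ∃ (a : E3) (c : ℝ),
      ∀ x ∈ kuhnTet ε σ, v x = ⟪a, x⟫ + c) :
    (∀ (σ : Equiv.Perm (Fin 3)) (α : Fin 3),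
        ∫ x in kuhnTet ε σ, fderiv ℝ v x (e3 α) ∂volume =
          ε ^ 3 / 6 * ((v (qEdge ε σ α + ε • e3 α) - v (qEdge ε σ α)) / ε)) ∧
    (∀ α : Fin 3,
        ∫ x in cellK ε, fderiv ℝ v x (e3 α) ∂volume =
          ε ^ 3 / 6 * ∑ σ : Equiv.Perm (Fin 3),
            (v (qEdge ε σ α + ε • e3 α) - v (qEdge ε σ α)) / ε) := by
  choose a c hv using hpl
  have htet : ∀ σ α, ∫ x in kuhnTet ε σ, fderiv ℝ v x (e3 α) =
      ε ^ 3 / 6 * ((v (qEdge ε σ α + ε • e3 α) - v (qEdge ε σ α)) / ε) := fun σ α => by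
    rw [setIntegral_fderiv_kuhnTet hε.le (hv σ), apply_qEdge_add_sub_apply_qEdge hε.le (hv σ),
      mul_div_cancel_left₀ _ hε.ne']
  refine ⟨htet, fun α => ?_⟩
  rw [setIntegral_congr_set (cellK_ae_eq_closedCell ε), ← iUnion_kuhnTet,
    integral_iUnion_ae (fun σ => (measurableSet_kuhnTet ε σ).nullMeasurableSet)
      (pairwise_aedisjoint_kuhnTet ε)
      (integrableOn_finite_iUnion.2 fun σ => integrableOn_fderiv_kuhnTet hε.le (hv σ) α),
    tsum_fintype, Finset.mul_sum]
  exact Finset.sum_congr rfl fun σ _ => htet σ α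

/-- Let `K = (0,ε)³` and let `v` be continuous on `closure K` and
piecewise affine with respect to a type A decomposition of `K` into six tetrahedra.
Then for every single tetrahedron `T` of the decomposition,
`∫_T ∂_α v dx = (ε³/6) (∇̃v|_T)_α`, where `(∇̃v|_T)_α` is the difference quotient of `v`
along the edge of `T` parallel to `e_α`; consequently, for each direction `α`,
`∫_K ∂_α v dx` equals `ε³/6` times the sum of these difference quotients over the six
tetrahedra. -/
theorem stmt5 (ε : ℝ) (hε : 0 < ε) (v : E3 → ℝ)
    (hcont : ContinuousOn v (closure (cellK ε)))
    (hpl : ∀ σ : Equiv.Perm (Fin 3), ∃ (a : E3) (c : ℝ),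
      ∀ x ∈ kuhnTet ε σ, v x = ⟪a, x⟫ + c) :
    (∀ (σ : Equiv.Perm (Fin 3)) (α : Fin 3),
        ∫ x in kuhnTet ε σ, fderiv ℝ v x (e3 α) ∂volume =
          ε ^ 3 / 6 * ((v (qEdge ε σ α + ε • e3 α) - v (qEdge ε σ α)) / ε)) ∧
    (∀ α : Fin 3,
        ∫ x in cellK ε, fderiv ℝ v x (e3 α) ∂volume =
          ε ^ 3 / 6 * ∑ σ : Equiv.Perm (Fin 3),
            (v (qEdge ε σ α + ε • e3 α) - v (qEdge ε σ α)) / ε) :=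
  stmt5_general ε hε v hpl
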